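/- The weights of an n-point Gaussian quadrature satisfy 1/w_i = Σ_{j=0}^{n−1} (φ_j(x_i))², where {φ_j} are the orthonormal polynomials for μ; in particular all weights are positive. -/
import Mathlib


open MeasureTheory

theorem gaussian_quadrature_weights_formula
    (a b : ℝ) (hab : a < b)
    (μ : Measure ℝ) [IsFiniteMeasure μ]
    (habs : μ ≪ volume) (hsupp : μ (Set.Ioo a b)ᶜ = 0)
    (n : ℕ) (hn : 0 < n)
    (hint : ∀ p : Polynomial ℝ, p.natDegree ≤ 2 * n - 1 →
      Integrable (fun t => p.eval t) μ)
    (φ : ℕ → Polynomial ℝ)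
    (hdeg : ∀ k, (φ k).natDegree = k)
    (horth : ∀ j k, j ≤ n → k ≤ n →
      ∫ t, (φ j).eval t * (φ k).eval t ∂μ = if j = k then 1 else 0)
    (x w : Fin n → ℝ)
    (hxinj : Function.Injective x)
    (hx : ∀ i, x i ∈ Set.Ioo a b)
    (hroots : ∀ i, (φ n).eval (x i) = 0)
    (hexact : ∀ p : Polynomial ℝ, p.natDegree ≤ 2 * n - 1 →
      ∑ i, w i * p.eval (x i) = ∫ t, p.eval t ∂μ) :
    ∀ i, 0 < w i ∧ 1 / w i = ∑ j ∈ Finset.range n, ((φ j).eval (x i)) ^ 2 := by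
  intro i
  set B : Matrix (Fin n) (Fin n) ℝ :=
    Matrix.of fun j k => (φ (j : ℕ)).eval (x k) with hB
  have hBD : B * (Matrix.diagonal w * B.transpose) = 1 := by
    ext j k
    have hdegjk : ((φ (j : ℕ)) * (φ (k : ℕ))).natDegree ≤ 2 * n - 1 := by
      calc ((φ (j : ℕ)) * (φ (k : ℕ))).natDegree
          ≤ (φ (j : ℕ)).natDegree + (φ (k : ℕ)).natDegree :=
            Polynomial.natDegree_mul_le
        _ ≤ 2 * n - 1 := by
            rw [hdeg, hdeg]; have := j.isLt; have := k.isLt; omega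
    have hex := hexact _ hdegjk
    have ho := horth (j : ℕ) (k : ℕ) (le_of_lt j.isLt) (le_of_lt k.isLt)
    have hl : (B * (Matrix.diagonal w * B.transpose)) j k
        = ∑ m, w m * ((φ (j : ℕ)) * (φ (k : ℕ))).eval (x m) := by
      simp only [Matrix.mul_apply, Matrix.diagonal_mul, Matrix.transpose_apply,
        hB, Matrix.of_apply, Polynomial.eval_mul]
      exact Finset.sum_congr rfl fun m _ => by
        simp [Matrix.diagonal_apply, ite_mul, mul_ite]; ring
    rw [hl, hex]
    have : ∫ t, ((φ (j : ℕ)) * (φ (k : ℕ))).eval t ∂μ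
        = ∫ t, (φ (j : ℕ)).eval t * (φ (k : ℕ)).eval t ∂μ := by
      simp [Polynomial.eval_mul]
    rw [this, ho]
    simp [Matrix.one_apply, Fin.val_eq_val]
  have h2 : (Matrix.diagonal w * B.transpose) * B = 1 := mul_eq_one_comm.mp hBD
  have hii : ((Matrix.diagonal w * B.transpose) * B) i i = (1 : Matrix (Fin n) (Fin n) ℝ) i i := by
    rw [h2]
  have key : w i * ∑ j ∈ Finset.range n, ((φ j).eval (x i)) ^ 2 = 1 := by
    have hl : ((Matrix.diagonal w * B.transpose) * B) i i
        = w i * ∑ k : Fin n, ((φ (k : ℕ)).eval (x i)) ^ 2 := by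
      simp only [Matrix.mul_apply, Matrix.diagonal_mul, Matrix.transpose_apply,
        hB, Matrix.of_apply, Finset.mul_sum]
      exact Finset.sum_congr rfl fun m _ => by
        simp [Matrix.diagonal_apply, ite_mul, mul_ite]; ring
    have hrange : ∑ k : Fin n, ((φ (k : ℕ)).eval (x i)) ^ 2
        = ∑ j ∈ Finset.range n, ((φ j).eval (x i)) ^ 2 :=
      Fin.sum_univ_eq_sum_range (fun j => ((φ j).eval (x i)) ^ 2) n
    rw [hl, hrange] at hii
    simpa using hii
  set S := ∑ j ∈ Finset.range n, ((φ j).eval (x i)) ^ 2 with hS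
  have hS0 : 0 ≤ S := Finset.sum_nonneg fun _ _ => sq_nonneg _
  have hSne : S ≠ 0 := by
    intro h; rw [h, mul_zero] at key; exact zero_ne_one key
    -- fallback
  have hSpos : 0 < S := lt_of_le_of_ne hS0 (Ne.symm hSne)
  have hw : w i = 1 / S := by field_simp; linarith [key]
  constructor
  · rw [hw]; positivity
  · rw [hw]; field_simp
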